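/- arXiv:1910.06208 — 2 statements merged into one kernel-verified Lean document; each statement's English description precedes it below -/
import Mathlib

section
/- Let n ≥ 1 and let i < k be positive integers. Let a_i < a_{i+1} < … < a_k be integers with a_{s+1} = a_s + 1 for all i ≤ s ≤ k−1, s ≤ a_s ≤ n for all s, and set w' = (s_{a_i} ⋯ s_i)(s_{a_{i+1}} ⋯ s_{i+1}) ⋯ (s_{a_k} ⋯ s_k) in S_{n+1}. Then for every integer l with i ≤ l ≤ a_k and l ≠ a_i, there exists an integer j with 1 ≤ j ≤ n and j ≠ k such that s_l · w' = w' · s_j. -/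
set_option maxHeartbeats 1000000

/-- The adjacent transposition `s j = (j, j+1)`, realized inside `Equiv.Perm ℕ`
(the subgroup permuting `{1,…,n+1}` is the symmetric group `S_{n+1}`). -/
def adjTrans (j : ℕ) : Equiv.Perm ℕ := Equiv.swap j (j + 1)

/-- The product `s_a s_{a-1} ⋯ s_b` with decreasing indices from `a` down to `b`. -/
def decProd (b a : ℕ) : Equiv.Perm ℕ :=
  ((List.range' b (a + 1 - b)).reverse.map adjTrans).prod

lemma decProd_apply (b m x : ℕ) :
    decProd b (b + m) x = if x = b then b + m + 1
      else if b < x ∧ x ≤ b + m + 1 then x - 1 else x := by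
  induction m with
  | zero =>
      have h1 : b + 0 + 1 - b = 1 := by omega
      simp only [decProd, h1, List.range'_one, List.reverse_singleton, List.map_singleton,
        List.prod_singleton, adjTrans, Equiv.swap_apply_def]
      split_ifs <;> omega
  | succ m ih =>
      have h1 : b + (m + 1) + 1 - b = (m + 1) + 1 := by omega
      have h2 : b + m + 1 - b = m + 1 := by omega
      rw [decProd, h1, List.range'_concat, List.reverse_append, List.reverse_singleton,
        List.singleton_append, List.map_cons, List.prod_cons]
      have h3 : b + 1 * (m + 1) = b + m + 1 := by ring
      rw [h3, Equiv.Perm.mul_apply]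
      have ih' : (((List.range' b (m + 1)).reverse.map adjTrans).prod) x
          = if x = b then b + m + 1 else if b < x ∧ x ≤ b + m + 1 then x - 1 else x := by
        have := ih
        rw [decProd, h2] at this
        exact this
      rw [ih', adjTrans, Equiv.swap_apply_def]
      split_ifs <;> omega

lemma prodFormula (m : ℕ) : ∀ len i x : ℕ,
    (((List.range' i len).map (fun t => decProd t (t + m))).prod) x =
      if x < i then x else if x < i + len then x + (m + 1)
        else if x < i + len + (m + 1) then x - len else x := by
  intro len
  induction len with
  | zero =>
      intro i x
      simp only [List.range'_zero, List.map_nil, List.prod_nil, Equiv.Perm.one_apply]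
      split_ifs <;> omega
  | succ len ih =>
      intro i x
      rw [List.range'_succ, List.map_cons, List.prod_cons, Equiv.Perm.mul_apply, ih,
        decProd_apply]
      split_ifs <;> omega

theorem stmt3 (n i k : ℕ) (a : ℕ → ℕ) (hn : 1 ≤ n) (hi : 1 ≤ i) (hik : i < k)
    (hstep : ∀ t, i ≤ t → t ≤ k - 1 → a (t + 1) = a t + 1)
    (hbound : ∀ t, i ≤ t → t ≤ k → t ≤ a t ∧ a t ≤ n) :
    ∀ l, i ≤ l → l ≤ a k → l ≠ a i →
      ∃ j, 1 ≤ j ∧ j ≤ n ∧ j ≠ k ∧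
        adjTrans l * (((List.range' i (k + 1 - i)).map (fun t => decProd t (a t))).prod)
          = (((List.range' i (k + 1 - i)).map (fun t => decProd t (a t))).prod) * adjTrans j := by
  intro l hil hlak hlai
  -- linearity of a on [i,k]
  have hlin : ∀ d, i + d ≤ k → a (i + d) = a i + d := by
    intro d
    induction d with
    | zero => intro _; simp
    | succ d ih =>
        intro hd
        have h1 : i + d ≤ k - 1 := by omega
        have := hstep (i + d) (by omega) h1
        rw [show i + (d + 1) = i + d + 1 by omega, this, ih (by omega)]
        omega
  set m := a i - i with hm
  have haii : i ≤ a i := (hbound i le_rfl (le_of_lt hik)).1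
  have hai : a i = i + m := by omega
  have hak : a k = k + m := by
    have := hlin (k - i) (by omega)
    rw [show i + (k - i) = k by omega] at this
    omega
  have hakn : a k ≤ n := (hbound k (le_of_lt hik) le_rfl).2
  -- rewrite the product using a t = t + m
  have hmap : ((List.range' i (k + 1 - i)).map (fun t => decProd t (a t)))
      = ((List.range' i (k + 1 - i)).map (fun t => decProd t (t + m))) := by
    apply List.map_congr_left
    intro t ht
    rw [List.mem_range'_1] at ht
    have : a t = t + m := by
      have := hlin (t - i) (by omega)
      rw [show i + (t - i) = t by omega] at this
      omega
    rw [this]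
  rw [hmap]
  have hkak : k ≤ a k := (hbound k (le_of_lt hik) le_rfl).1
  -- choose j
  rcases lt_or_ge l (i + m) with hc | hc
  · refine ⟨l + (k + 1 - i), by omega, by omega, by omega, ?_⟩
    apply Equiv.ext
    intro x
    simp only [Equiv.Perm.mul_apply, prodFormula, adjTrans, Equiv.swap_apply_def]
    split_ifs <;> omega
  · have hc' : i + m < l := by omega
    refine ⟨l - (m + 1), by omega, by omega, by omega, ?_⟩
    apply Equiv.ext
    intro x
    simp only [Equiv.Perm.mul_apply, prodFormula, adjTrans, Equiv.swap_apply_def]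
    split_ifs <;> omega
end

section
/- Let 1 ≤ r ≤ n, let a_1 < … < a_r be integers with i ≤ a_i ≤ n, and set w = (s_{a_1} ⋯ s_1)(s_{a_2} ⋯ s_2) ⋯ (s_{a_r} ⋯ s_r) in S_{n+1}. Suppose there exists 2 ≤ j ≤ r with a_j − a_{j−1} ≥ 2, and let j₂ be the least such j; set w₁ = (s_{a_1} ⋯ s_1) ⋯ (s_{a_{j₂−1}} ⋯ s_{j₂−1}). Then, with the A_n root conventions α_j = e_j − e_{j+1}, one has w₁^{−1}(α_{a_1}) = −Σ_{i=1}^{a_{j₂−1}} α_i and w^{−1}(α_{a_1}) = −Σ_{i=1}^{a_{j₂−1} + r + 1 − j₂} α_i; in particular w₁^{−1}(α_{a_1}) − w^{−1}(α_{a_1}) is a nonzero nonnegative integral combination of simple roots. -/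
/-- The standard basis vector `e p`. -/
def e (p : ℕ) : ℕ → ℤ := fun q => if q = p then 1 else 0

/-- The simple root `α j = e j - e (j+1)` of type `A`. -/
def α (j : ℕ) : ℕ → ℤ := fun q => e j q - e (j + 1) q

/-- The action of a permutation on vectors, permuting the standard basis:
`act σ (e p) = e (σ p)`. -/
def act (σ : Equiv.Perm ℕ) (v : ℕ → ℤ) : ℕ → ℤ := fun q => v (σ⁻¹ q)

open Finset

lemma decProd_self (b : ℕ) : decProd b b = adjTrans b := by
  simp [decProd]

lemma decProd_succ {b a : ℕ} (h : b ≤ a + 1) :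
    decProd b (a + 1) = adjTrans (a + 1) * decProd b a := by
  rw [decProd, decProd, show a + 1 + 1 - b = a + 1 - b + 1 by omega, List.range'_concat]
  simp [show b + (a + 1 - b) = a + 1 by omega]

lemma decProd_apply_of_lt_or_gt {b a x : ℕ} (hx : x < b ∨ a + 1 < x) : decProd b a x = x := by
  have hmem : decProd b a ∈ MulAction.stabilizer (Equiv.Perm ℕ) x := by
    refine list_prod_mem fun σ hσ => ?_
    simp only [List.mem_map, List.mem_reverse, List.mem_range'_1] at hσ
    obtain ⟨i, hi, rfl⟩ := hσ
    exact Equiv.swap_apply_of_ne_of_ne (by omega) (by omega)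
  exact hmem

lemma decProd_apply_self {b a : ℕ} (h : b ≤ a) : decProd b a b = a + 1 := by
  induction a, h using Nat.le_induction with
  | base => simp [decProd_self, adjTrans]
  | succ a hba ih =>
    rw [decProd_succ (by omega), Equiv.Perm.mul_apply, ih]
    simp [adjTrans]

lemma decProd_apply_succ {b a x : ℕ} (hbx : b ≤ x) (hxa : x ≤ a) :
    decProd b a (x + 1) = x := by
  induction a, hbx.trans hxa using Nat.le_induction with
  | base =>
    obtain rfl : x = b := by omega
    simp [decProd_self, adjTrans]
  | succ a hba ih =>
    rw [decProd_succ (by omega), Equiv.Perm.mul_apply]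
    rcases Nat.lt_or_ge x (a + 1) with hx | hx
    · rw [ih (by omega)]
      exact Equiv.swap_apply_of_ne_of_ne (by omega) (by omega)
    · obtain rfl : x = a + 1 := by omega
      rw [decProd_apply_of_lt_or_gt (Or.inr (by omega))]
      simp [adjTrans]

lemma decProd_inv_apply_of_lt {b a x : ℕ} (hx : x < b) : (decProd b a)⁻¹ x = x := by
  rw [Equiv.Perm.inv_eq_iff_eq, decProd_apply_of_lt_or_gt (Or.inl hx)]

lemma decProd_inv_apply_succ_self {b a : ℕ} (h : b ≤ a) : (decProd b a)⁻¹ (a + 1) = b := by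
  rw [Equiv.Perm.inv_eq_iff_eq, decProd_apply_self h]

lemma decProd_inv_apply_of_mem {b a x : ℕ} (hbx : b ≤ x) (hxa : x ≤ a) :
    (decProd b a)⁻¹ x = x + 1 := by
  rw [Equiv.Perm.inv_eq_iff_eq, decProd_apply_succ hbx hxa]

/-- `(s_{a_1} ⋯ s_1) ⋯ (s_{a_k} ⋯ s_k)`: `w₁` is `blockProd a (j₂ - 1)` and `w` is `blockProd a r`. -/
def blockProd (a : ℕ → ℕ) (k : ℕ) : Equiv.Perm ℕ :=
  ((List.range' 1 k).map (fun i => decProd i (a i))).prod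

lemma blockProd_one (a : ℕ → ℕ) : blockProd a 1 = decProd 1 (a 1) := by
  simp [blockProd]

lemma blockProd_inv_apply_succ (a : ℕ → ℕ) (k x : ℕ) :
    (blockProd a (k + 1))⁻¹ x = (decProd (k + 1) (a (k + 1)))⁻¹ ((blockProd a k)⁻¹ x) := by
  simp [blockProd, List.range'_concat, add_comm]

lemma act_inv_α (σ : Equiv.Perm ℕ) (p : ℕ) : act σ⁻¹ (α p) = e (σ⁻¹ p) - e (σ⁻¹ (p + 1)) := by
  funext q
  simp [act, α, e, Equiv.eq_symm_apply]

lemma sum_Icc_α (m : ℕ) : ∑ i ∈ Icc 1 m, α i = e 1 - e (m + 1) := by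
  induction m with
  | zero => funext q; simp
  | succ m ih =>
    rw [sum_Icc_succ_top (by omega), ih]
    funext q
    simp only [Pi.add_apply, Pi.sub_apply, α]
    ring

section Sequence

variable {a : ℕ → ℕ}

lemma add_le_apply_succ {k : ℕ} (hmono : ∀ i, 1 ≤ i → i < k → a i < a (i + 1)) :
    ∀ {i}, i < k → a 1 + i ≤ a (i + 1)
  | 0, _ => le_rfl
  | i + 1, hi => by
    have := add_le_apply_succ hmono (i := i) (by omega)
    have := hmono (i + 1) (by omega) hi
    omega

lemma apply_succ_eq_add {m : ℕ} (hconsec : ∀ t, 1 ≤ t → t ≤ m → a (t + 1) = a t + 1) :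
    ∀ {i}, i ≤ m → a (i + 1) = a 1 + i
  | 0, _ => rfl
  | i + 1, hi => by
    rw [hconsec (i + 1) (by omega) hi, apply_succ_eq_add hconsec (i := i) (by omega)]
    rfl

lemma blockProd_inv_apply_first_succ (ha1 : 1 ≤ a 1) {k : ℕ} (hk : 1 ≤ k) :
    (blockProd a k)⁻¹ (a 1 + 1) = 1 := by
  induction k, hk using Nat.le_induction with
  | base => rw [blockProd_one, decProd_inv_apply_succ_self ha1]
  | succ k hk ih => rw [blockProd_inv_apply_succ, ih, decProd_inv_apply_of_lt (by omega)]

lemma blockProd_inv_apply_first (ha1 : 1 ≤ a 1) {k : ℕ}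
    (hmono : ∀ i, 1 ≤ i → i < k → a i < a (i + 1)) (hk : 1 ≤ k) :
    (blockProd a k)⁻¹ (a 1) = a 1 + k := by
  induction k, hk using Nat.le_induction with
  | base => rw [blockProd_one, decProd_inv_apply_of_mem ha1 le_rfl]
  | succ k hk ih =>
    rw [blockProd_inv_apply_succ, ih fun i h1 h2 => hmono i h1 (by omega),
      decProd_inv_apply_of_mem (by omega) (add_le_apply_succ hmono (by omega))]
    ring

lemma act_blockProd_inv_α_first (ha1 : 1 ≤ a 1) {k : ℕ}
    (hmono : ∀ i, 1 ≤ i → i < k → a i < a (i + 1)) (hk : 1 ≤ k) :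
    act (blockProd a k)⁻¹ (α (a 1)) = -∑ i ∈ Icc 1 (a 1 + k - 1), α i := by
  rw [act_inv_α, blockProd_inv_apply_first ha1 hmono hk, blockProd_inv_apply_first_succ ha1 hk,
    sum_Icc_α, Nat.sub_add_cancel (by omega), neg_sub]

end Sequence

lemma sum_Icc_sub_sum_Icc {M : Type*} [AddCommGroup M] (f : ℕ → M) {p m n : ℕ}
    (hpm : p ≤ m) (hmn : m ≤ n) :
    ∑ i ∈ Icc 1 m, f i - ∑ i ∈ Icc 1 p, f i
      = ∑ i ∈ Icc 1 n, (((if p < i ∧ i ≤ m then 1 else 0 : ℕ)) : ℤ) • f i := by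
  simp only [Nat.cast_ite, Nat.cast_one, Nat.cast_zero, ite_smul, one_smul, zero_smul]
  have hIcc (k : ℕ) : Icc 1 k = Ioc 0 k := Icc_add_one_left_eq_Ioc 0 k
  rw [← sum_filter, show (Icc 1 n).filter (fun i => p < i ∧ i ≤ m) = Ioc p m by ext; simp; omega,
    hIcc m, hIcc p, ← sum_Ioc_consecutive f (Nat.zero_le p) hpm, add_sub_cancel_left]

theorem stmt8_general (n r j₂ : ℕ) (a : ℕ → ℕ)
    (hmono : ∀ i, 1 ≤ i → i < r → a i < a (i + 1))
    (hb : ∀ i, 1 ≤ i → i ≤ r → i ≤ a i ∧ a i ≤ n)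
    (hj1 : 2 ≤ j₂) (hj2 : j₂ ≤ r)
    (hconsec : ∀ t, 1 ≤ t → t ≤ j₂ - 2 → a (t + 1) = a t + 1) :
    act (((List.range' 1 (j₂ - 1)).map (fun i => decProd i (a i))).prod)⁻¹ (α (a 1))
        = -(∑ i ∈ Finset.Icc 1 (a (j₂ - 1)), α i) ∧
    act (((List.range' 1 r).map (fun i => decProd i (a i))).prod)⁻¹ (α (a 1))
        = -(∑ i ∈ Finset.Icc 1 (a (j₂ - 1) + r + 1 - j₂), α i) ∧
    ∃ c : ℕ → ℕ,
      (act (((List.range' 1 (j₂ - 1)).map (fun i => decProd i (a i))).prod)⁻¹ (α (a 1))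
          - act (((List.range' 1 r).map (fun i => decProd i (a i))).prod)⁻¹ (α (a 1))
        = ∑ i ∈ Finset.Icc 1 n, (c i : ℤ) • α i) ∧
      ∃ i, i ∈ Finset.Icc 1 n ∧ c i ≠ 0 := by
  have ha1 : 1 ≤ a 1 := (hb 1 le_rfl (by omega)).1
  have hP : a (j₂ - 1) = a 1 + (j₂ - 2) := by
    simpa [show j₂ - 2 + 1 = j₂ - 1 by omega] using apply_succ_eq_add hconsec (le_refl (j₂ - 2))
  have hgrow : a 1 + (r - 1) ≤ a (r - 1 + 1) := add_le_apply_succ hmono (by omega)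
  have han : a (r - 1 + 1) ≤ n := (hb (r - 1 + 1) (by omega) (by omega)).2
  have hw₁ : act (blockProd a (j₂ - 1))⁻¹ (α (a 1)) = -∑ i ∈ Icc 1 (a (j₂ - 1)), α i := by
    rw [act_blockProd_inv_α_first ha1 (fun i h h' => hmono i h (by omega)) (by omega)]
    congr 3; omega
  have hw : act (blockProd a r)⁻¹ (α (a 1)) = -∑ i ∈ Icc 1 (a (j₂ - 1) + r + 1 - j₂), α i := by
    rw [act_blockProd_inv_α_first ha1 hmono (by omega)]
    congr 3; omega
  have hdiff := sum_Icc_sub_sum_Icc α (p := a (j₂ - 1)) (m := a (j₂ - 1) + r + 1 - j₂) (n := n)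
    (by omega) (by omega)
  refine ⟨hw₁, hw, fun i => if a (j₂ - 1) < i ∧ i ≤ a (j₂ - 1) + r + 1 - j₂ then 1 else 0, ?_,
    a (j₂ - 1) + 1, ?_, ?_⟩
  · rw [blockProd] at hw₁ hw
    rw [hw₁, hw, neg_sub_neg]
    exact hdiff
  · simp only [mem_Icc]; omega
  · beta_reduce; simp only [ite_ne_right_iff]; omega

theorem stmt8 (n r j₂ : ℕ) (a : ℕ → ℕ)
    (h1 : 1 ≤ r) (h2 : r ≤ n)
    (hmono : ∀ i, 1 ≤ i → i < r → a i < a (i + 1))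
    (hb : ∀ i, 1 ≤ i → i ≤ r → i ≤ a i ∧ a i ≤ n)
    (hj1 : 2 ≤ j₂) (hj2 : j₂ ≤ r)
    (hgap : a (j₂ - 1) + 2 ≤ a j₂)
    (hleast : ∀ j, 2 ≤ j → j < j₂ → a j < a (j - 1) + 2)
    (hconsec : ∀ t, 1 ≤ t → t ≤ j₂ - 2 → a (t + 1) = a t + 1) :
    act (((List.range' 1 (j₂ - 1)).map (fun i => decProd i (a i))).prod)⁻¹ (α (a 1))
        = -(∑ i ∈ Finset.Icc 1 (a (j₂ - 1)), α i) ∧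
    act (((List.range' 1 r).map (fun i => decProd i (a i))).prod)⁻¹ (α (a 1))
        = -(∑ i ∈ Finset.Icc 1 (a (j₂ - 1) + r + 1 - j₂), α i) ∧
    ∃ c : ℕ → ℕ,
      (act (((List.range' 1 (j₂ - 1)).map (fun i => decProd i (a i))).prod)⁻¹ (α (a 1))
          - act (((List.range' 1 r).map (fun i => decProd i (a i))).prod)⁻¹ (α (a 1))
        = ∑ i ∈ Finset.Icc 1 n, (c i : ℤ) • α i) ∧
      ∃ i, i ∈ Finset.Icc 1 n ∧ c i ≠ 0 :=
  stmt8_general n r j₂ a hmono hb hj1 hj2 hconsec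
end
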